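/- Let F be a field and A a k×(n−k) matrix over F such that the block matrix G = (I_k | A) is not an LCED matrix. Let Q be any (n−k)×(n−k) permutation matrix and set M = A·Q·Aᵀ. Then for every k×k permutation matrix P', we have det(I_k + P'·M) = 0 and det(I_k + M·P') = 0; in other words, −1 is an eigenvalue of every row permutation and every column permutation of M. -/

import Mathlib

open Matrix

/-- The permutation matrix of `σ`: the `(i, j)` entry is `1` if `σ j = i` and `0` otherwise. -/
def permMat (F : Type*) [Zero F] [One F] {n : Type*} [DecidableEq n]
    (σ : Equiv.Perm n) : Matrix n n F :=
  Matrix.of fun i j => if σ j = i then 1 else 0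

/-- A matrix `G` over a field is an LCED matrix if there is a permutation matrix `P`
such that `G * P * Gᵀ` is invertible. -/
def IsLCEDMatrix {F : Type*} [Field F] {k n : Type*} [Fintype k] [Fintype n]
    [DecidableEq k] [DecidableEq n] (G : Matrix k n F) : Prop :=
  ∃ σ : Equiv.Perm n, IsUnit (G * permMat F σ * Gᵀ)

/-!
If `G = (I | A)` and `P` is the block-diagonal permutation matrix `diag(P_τ, P_Q)`, then
`G P Gᵀ = P_τ + A P_Q Aᵀ`. So when `G` is not LCED, `P_τ + A P_Q Aᵀ` is singular for every `τ`;
taking `τ = σ⁻¹` and factoring out `P_σ` on either side gives the singularity of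
`I + P_σ M` and of `I + M P_σ`.
-/

section PermMat

variable {F : Type*} {n p : Type*} [DecidableEq n] [DecidableEq p]

lemma permMat_eq_permMatrix_inv [Zero F] [One F] (σ : Equiv.Perm n) :
    permMat F σ = σ⁻¹.permMatrix F := by
  ext i j
  simp [permMat, Equiv.Perm.inv_def, Equiv.eq_symm_apply, eq_comm]

lemma permMat_one [Zero F] [One F] : permMat F (1 : Equiv.Perm n) = 1 := by
  simp [permMat_eq_permMatrix_inv]

lemma permMat_mul [NonAssocSemiring F] [Fintype n] (σ τ : Equiv.Perm n) :
    permMat F σ * permMat F τ = permMat F (σ * τ) := by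
  simp only [permMat_eq_permMatrix_inv, _root_.mul_inv_rev, permMatrix_mul]

lemma permMat_sumCongr [Zero F] [One F] (σ : Equiv.Perm n) (τ : Equiv.Perm p) :
    permMat F (Equiv.sumCongr σ τ) = fromBlocks (permMat F σ) 0 0 (permMat F τ) := by
  ext (i | i) (j | j) <;> simp [permMat, fromBlocks]

lemma one_add_permMat_mul [NonAssocSemiring F] [Fintype n] (σ : Equiv.Perm n)
    (M : Matrix n n F) : 1 + permMat F σ * M = permMat F σ * (permMat F σ⁻¹ + M) := by
  rw [Matrix.mul_add, permMat_mul, mul_inv_cancel, permMat_one]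

lemma one_add_mul_permMat [NonAssocSemiring F] [Fintype n] (σ : Equiv.Perm n)
    (M : Matrix n n F) : 1 + M * permMat F σ = (permMat F σ⁻¹ + M) * permMat F σ := by
  rw [Matrix.add_mul, permMat_mul, inv_mul_cancel, permMat_one]

lemma fromCols_one_mul_permMat_sumCongr_mul_transpose [Semiring F] [Fintype n] [Fintype p]
    (A : Matrix n p F) (τ : Equiv.Perm n) (Q : Equiv.Perm p) :
    fromCols (1 : Matrix n n F) A * permMat F (Equiv.sumCongr τ Q) *
      (fromCols (1 : Matrix n n F) A)ᵀ
      = permMat F τ + A * permMat F Q * Aᵀ := by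
  rw [permMat_sumCongr, fromCols_mul_fromBlocks, transpose_fromCols, fromCols_mul_fromRows]
  simp only [Matrix.mul_zero, add_zero, zero_add, Matrix.one_mul, Matrix.mul_one,
    transpose_one]

end PermMat

section LCED

variable {F : Type*} [Field F] {k m : Type*} [Fintype k] [Fintype m]
  [DecidableEq k] [DecidableEq m]

lemma det_permMat_add_eq_zero_of_not_isLCEDMatrix (A : Matrix k m F)
    (h : ¬ IsLCEDMatrix (fromCols (1 : Matrix k k F) A))
    (τ : Equiv.Perm k) (Q : Equiv.Perm m) :
    (permMat F τ + A * permMat F Q * Aᵀ).det = 0 := by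
  by_contra hdet
  refine h ⟨Equiv.sumCongr τ Q, ?_⟩
  rw [fromCols_one_mul_permMat_sumCongr_mul_transpose, isUnit_iff_isUnit_det]
  exact isUnit_iff_ne_zero.mpr hdet

end LCED

/-- if `(I_k | A)` is not an LCED matrix then, with `M = A·Q·Aᵀ` for any
permutation matrix `Q`, every row permutation and column permutation of `M` has `-1` as
an eigenvalue, i.e. `det(I + P'·M) = 0 = det(I + M·P')` for every permutation matrix `P'`. -/
theorem stmt10 {F : Type*} [Field F] {k m : ℕ} (A : Matrix (Fin k) (Fin m) F)
    (h : ¬ IsLCEDMatrix (fromCols (1 : Matrix (Fin k) (Fin k) F) A))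
    (Q : Equiv.Perm (Fin m)) (P' : Equiv.Perm (Fin k)) :
    ((1 : Matrix (Fin k) (Fin k) F) + permMat F P' * (A * permMat F Q * Aᵀ)).det = 0 ∧
    ((1 : Matrix (Fin k) (Fin k) F) + (A * permMat F Q * Aᵀ) * permMat F P').det = 0 := by
  have hsingular := det_permMat_add_eq_zero_of_not_isLCEDMatrix A h P'⁻¹ Q
  constructor
  · rw [one_add_permMat_mul, det_mul, hsingular, mul_zero]
  · rw [one_add_mul_permMat, det_mul, hsingular, zero_mul]
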